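/- In the GDNC setup, assume the row space of [I_k | P] is an (n,k) MDS code, i.e., has minimum distance M·k2 + 1. Then for every set S of faults, d_min(C(S)) + |S| ≥ M + k2. -/

import Mathlib

open Matrix

/-- The minimum Hamming distance of a linear code: the minimum Hamming weight of a
nonzero codeword. -/
noncomputable def dmin {F : Type*} [Field F] [DecidableEq F] {ι : Type*} [Fintype ι]
    (C : Submodule F (ι → F)) : ℕ :=
  sInf {d | ∃ x ∈ C, x ≠ 0 ∧ hammingNorm x = d}

/-- The row space of a matrix, i.e. the linear code generated by its rows. -/
def rowSpace {F : Type*} [Field F] {κ ι : Type*} (G : Matrix κ ι F) :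
    Submodule F (ι → F) :=
  Submodule.span F (Set.range fun i => G i)

/-- The systematic generator matrix `[I_k | P]`. -/
def sysGen {F : Type*} [Field F] [DecidableEq F] {k m : ℕ}
    (P : Matrix (Fin k) (Fin m) F) : Matrix (Fin k) (Fin k ⊕ Fin m) F :=
  Matrix.fromCols 1 P

/-- GDNC setup: row `r` of `P` belongs to user block `r / k1`, column `c` to user
block `c / k2`.  A fault `(i, r)` (with `i < M` and `i ≠ r / k1`) zeroes the entries
of row `r` lying in column block `i`.  `faultyP M k1 k2 P S` is the faulty parity
matrix `P_S` resulting from the set of faults `S`. -/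
def faultyP {F : Type*} [Field F] (M k1 k2 : ℕ)
    (P : Matrix (Fin (M * k1)) (Fin (M * k2)) F)
    (S : Finset (ℕ × Fin (M * k1))) : Matrix (Fin (M * k1)) (Fin (M * k2)) F :=
  fun r c => if ((c : ℕ) / k2, r) ∈ S then 0 else P r c

/-- `S` is a set of faults: each element `(i, r)` has `i ∈ {0, …, M−1}` a user index
different from the block `r / k1` of row `r`. -/
def IsFaultSet (M k1 : ℕ) (S : Finset (ℕ × Fin (M * k1))) : Prop :=
  ∀ p ∈ S, p.1 < M ∧ (p.2 : ℕ) / k1 ≠ p.1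

/- ---------- auxiliary lemmas ---------- -/

lemma hn_sum_elim {F : Type*} [DecidableEq F] [Zero F] {α β : Type*} [Fintype α] [Fintype β]
    (f : α → F) (g : β → F) :
    hammingNorm (Sum.elim f g) = hammingNorm f + hammingNorm g := by
  unfold hammingNorm
  rw [← Finset.card_toLeft_add_card_toRight]
  congr 1 <;> · congr 1; ext; simp

lemma hn_le_count {F : Type*} [DecidableEq F] [Zero F] {m : Type*} [Fintype m] [DecidableEq m]
    (f g : m → F) (T : Finset m) (h : ∀ c, f c ≠ 0 → g c ≠ 0 ∨ c ∈ T) :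
    hammingNorm f ≤ hammingNorm g + T.card := by
  refine le_trans (Finset.card_le_card (show (Finset.univ.filter fun c => f c ≠ 0)
      ⊆ (Finset.univ.filter fun c => g c ≠ 0) ∪ T from ?_)) (Finset.card_union_le _ _)
  intro c hc
  simp only [Finset.mem_filter, Finset.mem_univ, true_and] at hc
  rcases h c hc with h' | h' <;> simp [Finset.mem_union, h']

lemma mem_rowSpace_iff {F : Type*} [Field F] {κ ι : Type*} [Fintype κ] (G : Matrix κ ι F)
    (x : ι → F) : x ∈ rowSpace G ↔ ∃ u : κ → F, u ᵥ* G = x := by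
  have : rowSpace G = LinearMap.range G.vecMulLinear := by
    rw [range_vecMulLinear]; rfl
  rw [this]
  exact Iff.rfl

lemma card_block_le {M k2 : ℕ} (i : ℕ) :
    (Finset.univ.filter (fun c : Fin (M * k2) => (c : ℕ) / k2 = i)).card ≤ k2 := by
  rcases Nat.eq_zero_or_pos k2 with h0 | hpos
  · subst h0
    exact le_of_eq (by simp [Finset.card_eq_zero, Finset.filter_eq_empty_iff])
  have := Finset.card_le_card_of_injOn (f := fun c : Fin (M * k2) => (c : ℕ) % k2)
    (s := Finset.univ.filter (fun c : Fin (M * k2) => (c : ℕ) / k2 = i))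
    (t := Finset.range k2)
    (fun c _ => Finset.mem_range.2 (Nat.mod_lt _ hpos))
    (by
      intro c1 h1 c2 h2 hm
      simp only [Finset.coe_filter, Set.mem_setOf_eq, Finset.mem_univ, true_and] at h1 h2
      simp only at hm
      apply Fin.ext
      have e1 := Nat.div_add_mod (c1 : ℕ) k2
      have e2 := Nat.div_add_mod (c2 : ℕ) k2
      rw [h1] at e1; rw [h2] at e2
      omega)
  simpa using this

lemma le_card_block {M k2 : ℕ} (hk2 : 1 ≤ k2) {j : ℕ} (hj : j < M) :
    k2 ≤ (Finset.univ.filter (fun c : Fin (M * k2) => (c : ℕ) / k2 = j)).card := by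
  have hlt : ∀ t, t < k2 → j * k2 + t < M * k2 := by
    intro t ht
    calc j * k2 + t < j * k2 + k2 := by omega
      _ = (j + 1) * k2 := by ring
      _ ≤ M * k2 := Nat.mul_le_mul_right _ (by omega)
  have hMk : 0 < M * k2 := Nat.mul_pos (by omega) (by omega)
  have := Finset.card_le_card_of_injOn
    (f := fun t : ℕ => if h : t < k2 then (⟨j * k2 + t, hlt t h⟩ : Fin (M * k2))
      else ⟨0, hMk⟩)
    (s := Finset.range k2)
    (t := Finset.univ.filter (fun c : Fin (M * k2) => (c : ℕ) / k2 = j))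
    (by
      intro t ht
      rw [Finset.mem_coe, Finset.mem_range] at ht
      simp only [ht, dif_pos, Finset.mem_coe, Finset.mem_filter, Finset.mem_univ, true_and]
      rw [mul_comm j k2, Nat.mul_add_div (by omega)]
      simp [Nat.div_eq_of_lt ht])
    (by
      intro t1 h1 t2 h2 he
      simp only [Finset.coe_range, Set.mem_Iio] at h1 h2
      simp only [h1, h2, dif_pos] at he
      have := congrArg (fun x : Fin (M * k2) => (x : ℕ)) he
      simpa using this)
  simpa using this

/-- For an MDS network code in the GDNC setup, every set of faults `S` satisfies
`d_min(C(S)) + |S| ≥ M + k2`. -/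
theorem composite_distance_ge_of_mds {F : Type*} [Field F] [DecidableEq F]
    (M k1 k2 : ℕ) (hM : 1 ≤ M) (hk1 : 1 ≤ k1) (hk2 : 1 ≤ k2)
    (P : Matrix (Fin (M * k1)) (Fin (M * k2)) F)
    (hMDS : dmin (rowSpace (sysGen P)) = M * k2 + 1) :
    ∀ S : Finset (ℕ × Fin (M * k1)), IsFaultSet M k1 S →
      M + k2 ≤ dmin (rowSpace (sysGen (faultyP M k1 k2 P S))) + S.card := by
  intro S hS
  have hkpos : 0 < M * k1 := Nat.mul_pos hM hk1
  set Ps := faultyP M k1 k2 P S with hPs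
  have hne : {d | ∃ x ∈ rowSpace (sysGen Ps), x ≠ 0 ∧ hammingNorm x = d}.Nonempty := by
    refine ⟨_, sysGen Ps ⟨0, hkpos⟩, ?_, ?_, rfl⟩
    · exact Submodule.subset_span ⟨⟨0, hkpos⟩, rfl⟩
    · intro h
      have := congrFun h (Sum.inl ⟨0, hkpos⟩)
      simp [sysGen, Matrix.fromCols, Matrix.one_apply] at this
  have hmem := Nat.sInf_mem hne
  obtain ⟨x, hxC, hx0, hxd⟩ := hmem
  unfold dmin
  rw [← hxd]
  obtain ⟨u, hux⟩ := (mem_rowSpace_iff _ x).1 hxC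
  have hxe : x = Sum.elim u (u ᵥ* Ps) := by
    rw [← hux, sysGen, vecMul_fromCols, vecMul_one]
  have hu0 : u ≠ 0 := by
    intro h
    apply hx0
    rw [hxe, h]
    ext (i | c) <;> simp [Matrix.vecMul, dotProduct]
  set B : Finset ℕ := (S.filter fun p => u p.2 ≠ 0).image Prod.fst with hB
  have hbS : B.card ≤ S.card :=
    le_trans (Finset.card_image_le) (Finset.card_filter_le _ _)
  have hbM : B.card ≤ M := by
    have hsub : B ⊆ Finset.range M := by
      intro i hi
      rw [hB] at hi
      obtain ⟨p, hp, rfl⟩ := Finset.mem_image.1 hi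
      exact Finset.mem_range.2 (hS p (Finset.mem_filter.1 hp).1).1
    simpa using Finset.card_le_card hsub
  have hxsplit : hammingNorm x = hammingNorm u + hammingNorm (u ᵥ* Ps) := by
    rw [hxe, hn_sum_elim]
  -- key1 : MDS bound against the unfaulted codeword
  have key1 : M * k2 + 1 ≤ hammingNorm x + k2 * B.card := by
    have hyC : Sum.elim u (u ᵥ* P) ∈ rowSpace (sysGen P) := by
      rw [mem_rowSpace_iff]
      exact ⟨u, by rw [sysGen, vecMul_fromCols, vecMul_one]⟩
    have hy0 : Sum.elim u (u ᵥ* P) ≠ 0 := by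
      intro h
      apply hu0
      ext i
      have := congrFun h (Sum.inl i)
      simpa using this
    have hy : M * k2 + 1 ≤ hammingNorm (Sum.elim u (u ᵥ* P)) := by
      rw [← hMDS]
      exact Nat.sInf_le ⟨_, hyC, hy0, rfl⟩
    rw [hn_sum_elim] at hy
    have hcount : hammingNorm (u ᵥ* P) ≤ hammingNorm (u ᵥ* Ps)
        + (Finset.univ.filter (fun c : Fin (M * k2) => (c : ℕ) / k2 ∈ B)).card := by
      apply hn_le_count
      intro c hc
      by_cases hcB : (c : ℕ) / k2 ∈ B
      · right; simpa using hcB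
      · left
        intro h0
        apply hc
        rw [← h0]
        unfold Matrix.vecMul dotProduct
        apply Finset.sum_congr rfl
        intro r _
        rw [hPs]
        unfold faultyP
        by_cases hrS : ((c : ℕ) / k2, r) ∈ S
        · have hur : u r = 0 := by
            by_contra hur
            exact hcB (Finset.mem_image.2 ⟨((c : ℕ) / k2, r),
              Finset.mem_filter.2 ⟨hrS, hur⟩, rfl⟩)
          simp [hrS, hur]
        · simp [hrS]
    have hT : (Finset.univ.filter (fun c : Fin (M * k2) => (c : ℕ) / k2 ∈ B)).card
        ≤ k2 * B.card := by
      calc (Finset.univ.filter (fun c : Fin (M * k2) => (c : ℕ) / k2 ∈ B)).card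
          ≤ (B.biUnion (fun i => Finset.univ.filter
              (fun c : Fin (M * k2) => (c : ℕ) / k2 = i))).card := by
            apply Finset.card_le_card
            intro c hc
            simp only [Finset.mem_filter, Finset.mem_univ, true_and] at hc
            exact Finset.mem_biUnion.2 ⟨_, hc, by simp⟩
        _ ≤ ∑ i ∈ B, (Finset.univ.filter
              (fun c : Fin (M * k2) => (c : ℕ) / k2 = i)).card := Finset.card_biUnion_le
        _ ≤ ∑ _i ∈ B, k2 := Finset.sum_le_sum (fun i _ => card_block_le i)
        _ = k2 * B.card := by rw [Finset.sum_const, smul_eq_mul, mul_comm]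
    omega
  -- key2 : weight at least k2 + 1
  have key2 : k2 + 1 ≤ hammingNorm x := by
    obtain ⟨r0, hr0⟩ : ∃ r0, u r0 ≠ 0 := Function.ne_iff.1 hu0
    set j : ℕ := (r0 : ℕ) / k1 with hj
    have hjM : j < M := Nat.div_lt_of_lt_mul (lt_of_lt_of_eq r0.2 (Nat.mul_comm M k1))
    set u' : Fin (M * k1) → F := fun r => if (j, r) ∈ S then 0 else u r with hu'
    have hu'r0 : u' r0 = u r0 := by
      rw [hu']
      simp only
      rw [if_neg]
      intro hmemS
      exact (hS _ hmemS).2 rfl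
    have hy'0 : u' ≠ 0 := by
      intro h
      apply hr0
      rw [← hu'r0, h]
      rfl
    have hy'C : Sum.elim u' (u' ᵥ* P) ∈ rowSpace (sysGen P) := by
      rw [mem_rowSpace_iff]
      exact ⟨u', by rw [sysGen, vecMul_fromCols, vecMul_one]⟩
    have hy'ne : Sum.elim u' (u' ᵥ* P) ≠ 0 := by
      intro h
      apply hy'0
      ext i
      have := congrFun h (Sum.inl i)
      simpa using this
    have hy' : M * k2 + 1 ≤ hammingNorm (Sum.elim u' (u' ᵥ* P)) := by
      rw [← hMDS]
      exact Nat.sInf_le ⟨_, hy'C, hy'ne, rfl⟩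
    rw [hn_sum_elim] at hy'
    have hnu' : hammingNorm u' ≤ hammingNorm u := by
      have := hn_le_count u' u ∅ (by
        intro r hr
        left
        rw [hu'] at hr
        simp only at hr
        by_cases hrS : (j, r) ∈ S
        · simp [hrS] at hr
        · simpa [hrS] using hr)
      simpa using this
    -- split hN (u' ᵥ* P) into block j and the rest
    set nj : ℕ := (Finset.univ.filter
      (fun c : Fin (M * k2) => (u' ᵥ* P) c ≠ 0 ∧ (c : ℕ) / k2 = j)).card with hnj
    have hsplit : hammingNorm (u' ᵥ* P) ≤ nj + (M * k2 - k2) := by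
      set g : Fin (M * k2) → F := fun c => if (c : ℕ) / k2 = j then (u' ᵥ* P) c else 0 with hg
      have h1 : hammingNorm (u' ᵥ* P) ≤ hammingNorm g
          + (Finset.univ.filter (fun c : Fin (M * k2) => ¬ ((c : ℕ) / k2 = j))).card := by
        apply hn_le_count
        intro c hc
        by_cases hcj : (c : ℕ) / k2 = j
        · left; rw [hg]; simpa [hcj] using hc
        · right; simp [hcj]
      have h2 : hammingNorm g = nj := by
        rw [hnj]
        unfold hammingNorm
        congr 1
        ext c
        by_cases hcj : (c : ℕ) / k2 = j <;> simp [hg, hcj]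
      have h3 : (Finset.univ.filter (fun c : Fin (M * k2) => ¬ ((c : ℕ) / k2 = j))).card
          ≤ M * k2 - k2 := by
        have hadd := Finset.card_filter_add_card_filter_not
          (s := (Finset.univ : Finset (Fin (M * k2))))
          (p := fun c : Fin (M * k2) => (c : ℕ) / k2 = j)
        have hge := le_card_block (M := M) hk2 hjM
        have huniv : (Finset.univ : Finset (Fin (M * k2))).card = M * k2 := by simp
        omega
      omega
    -- nj is bounded by the weight of the faulty part
    have hagree : nj ≤ hammingNorm (u ᵥ* Ps) := by
      rw [hnj]
      apply Finset.card_le_card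
      intro c hc
      simp only [Finset.mem_filter, Finset.mem_univ, true_and] at hc ⊢
      obtain ⟨hc0, hcj⟩ := hc
      intro h0
      apply hc0
      rw [← h0]
      unfold Matrix.vecMul dotProduct
      apply Finset.sum_congr rfl
      intro r _
      rw [hPs]
      unfold faultyP
      rw [hu']
      simp only [hcj]
      by_cases hrS : (j, r) ∈ S <;> simp [hrS]
    have hk2M : k2 ≤ M * k2 := le_mul_of_one_le_left (Nat.zero_le _) hM
    omega
  -- combine
  rcases Nat.lt_or_ge B.card M with hb | hb
  · -- B.card + 1 ≤ M
    have haux : M + k2 + k2 * B.card ≤ M * k2 + 1 + B.card := by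
      obtain ⟨c, hc⟩ : ∃ c, M = B.card + 1 + c := ⟨M - B.card - 1, by omega⟩
      rw [hc]
      have h1 : c ≤ c * k2 := Nat.le_mul_of_pos_right c (by omega)
      nlinarith
    omega
  · have hSM : M ≤ S.card := le_trans (le_trans hb (le_of_eq rfl)) hbS
    omega
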